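/- Let ρ < σ < τ in NC_n. (a) If ρ = σ_0 ⋖ σ_1 ⋖ ⋯ ⋖ σ_k = σ is a saturated chain with label sequence α_i = π(σ_{i−1})⁻¹π(σ_i), then there is a unique noncrossing partition σ' of [n] admitting a saturated chain σ' = ρ_0 ⋖ ρ_1 ⋖ ⋯ ⋖ ρ_k = τ with π(ρ_{i−1})⁻¹π(ρ_i) = α_i for all i. (b) Dually, if σ = σ_0 ⋖ σ_1 ⋖ ⋯ ⋖ σ_k = τ is a saturated chain with label sequence β_i = π(σ_{i−1})⁻¹π(σ_i), then there is a unique noncrossing partition σ'' of [n] admitting a saturated chain ρ = ρ_0 ⋖ ρ_1 ⋖ ⋯ ⋖ ρ_k = σ'' with π(ρ_{i−1})⁻¹π(ρ_i) = β_i for all i. -/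

import Mathlib

/-- A partition of `[n]` (encoded as an equivalence relation / setoid on `Fin n`)
is *noncrossing* if there are no elements `a < b < c < d` with `a` and `c` in one
block and `b` and `d` in a different block. -/
def IsNoncrossing {n : ℕ} (σ : Setoid (Fin n)) : Prop :=
  ∀ a b c d : Fin n, a < b → b < c → c < d → σ a c → σ b d → σ a b

/-- The noncrossing partition lattice `NC_n`, ordered by refinement. -/
abbrev NC (n : ℕ) := {σ : Setoid (Fin n) // IsNoncrossing σ}

/-- `p` is the permutation `π(σ)` associated to the partition `σ`: each block of `σ`
is a cycle of `p`, cycled in increasing order. -/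
def IsPiPerm {n : ℕ} (σ : Setoid (Fin n)) (p : Equiv.Perm (Fin n)) : Prop :=
  ∀ x : Fin n,
    σ x (p x) ∧
    ((∃ y, σ x y ∧ x < y) → (x < p x ∧ ∀ y, σ x y → x < y → p x ≤ y)) ∧
    ((∀ y, σ x y → y ≤ x) → ∀ y, σ x y → p x ≤ y)

/-!
Write `c(w)` for the number of cycles of a permutation `w`. Multiplying `w` on the right by a
transposition `(a b)` merges the cycles of `a` and `b` or splits their common cycle, so it changes
`c` by one. If `a < b` lie in one block of a noncrossing `σ`, then `π(σ) (a b) = π(σ')`, where `σ'`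
cuts that block into its part in `(a, b]` and the rest; every cover `σ' ⋖ σ` arises this way. So
the labels of a saturated chain are transpositions and `c ∘ π` drops by one along each cover.
Conversely, a sequence `v₀, …, v_k` with transposition steps, `v_k = π(τ)` and
`c(v₀) = c(v_k) + k` comes from a saturated chain ending at `τ`: read downwards, every step has to
split a cycle of a noncrossing permutation.

For (a), translate the given chain on the left by `g = π(τ) π(σ)⁻¹`; this keeps the labels, ends at
`π(τ)`, and `c(g π(ρ)) ≥ c(π(ρ)) - m = c(π(τ)) + k`, because `g π(ρ)` is reached from `π(ρ)` by the
`m` transpositions labelling a saturated chain from `σ` to `τ`. For (b), translate by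
`g = π(ρ) π(σ)⁻¹`; its far end `g π(τ)` is first shown to be some `π(σ'')` by translating a chain
from `ρ` to `σ`. Uniqueness holds because `π(dᵢ) π(d'ᵢ)⁻¹` is constant along two chains with the
same labels.
-/

open Equiv Equiv.Perm

instance Setoid.instFinite {α : Type*} [Finite α] : Finite (Setoid α) :=
  Finite.of_injective (fun s : Setoid α => (s : α → α → Prop)) fun _ _ h =>
    Setoid.ext fun a b => iff_of_eq (congrFun (congrFun h a) b)

lemma mul_inv_eq_of_forall_inv_mul_eq {G : Type*} [Group G] {f g : ℕ → G} {k : ℕ}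
    (h : ∀ i < k, (f i)⁻¹ * f (i + 1) = (g i)⁻¹ * g (i + 1)) :
    f k * (g k)⁻¹ = f 0 * (g 0)⁻¹ := by
  induction k with
  | zero => rfl
  | succ k ih =>
    rw [← ih fun i hi => h i (by omega)]
    have hk := h k (by omega)
    rw [inv_mul_eq_iff_eq_mul] at hk
    rw [hk]
    group

namespace Nat

variable {f : ℕ → ℕ} {k : ℕ}

lemma le_add_of_forall_le_add_one (h : ∀ i < k, f i ≤ f (i + 1) + 1) : f 0 ≤ f k + k := by
  induction k with
  | zero => rfl
  | succ k ih =>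
    have := ih fun i hi => h i (by omega)
    have := h k (by omega)
    omega

lemma eq_add_of_forall_eq_add_one (h : ∀ i < k, f i = f (i + 1) + 1) : f 0 = f k + k := by
  induction k with
  | zero => rfl
  | succ k ih =>
    have := ih fun i hi => h i (by omega)
    have := h k (by omega)
    omega

lemma forall_eq_add_one_of_le_add_one (h : ∀ i < k, f i ≤ f (i + 1) + 1)
    (hk : f k + k ≤ f 0) : ∀ i < k, f i = f (i + 1) + 1 := by
  intro i hi
  have head : f 0 ≤ f i + i := le_add_of_forall_le_add_one fun j hj => h j (by omega)
  have tail : f (i + 1) ≤ f k + (k - (i + 1)) := by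
    have := le_add_of_forall_le_add_one (f := fun j => f (i + 1 + j)) (k := k - (i + 1))
      fun j hj => by simpa only [Nat.add_assoc] using h (i + 1 + j) (by omega)
    simpa only [show i + 1 + (k - (i + 1)) = k by omega, Nat.add_zero] using this
  have := h i hi
  omega

end Nat

namespace Setoid

variable {α : Type*}

def mergeAt (s : Setoid α) (a b : α) : Setoid α where
  r x y := s x y ∨ (s x a ∧ s b y) ∨ (s x b ∧ s a y)
  iseqv :=
    { refl := fun x => Or.inl (s.refl' x)
      symm := by
        rintro x y (h | ⟨h₁, h₂⟩ | ⟨h₁, h₂⟩)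
        · exact Or.inl (s.symm' h)
        · exact Or.inr (Or.inr ⟨s.symm' h₂, s.symm' h₁⟩)
        · exact Or.inr (Or.inl ⟨s.symm' h₂, s.symm' h₁⟩)
      trans := by
        rintro x y z (h | ⟨h₁, h₂⟩ | ⟨h₁, h₂⟩) (g | ⟨g₁, g₂⟩ | ⟨g₁, g₂⟩)
        · exact Or.inl (s.trans' h g)
        · exact Or.inr (Or.inl ⟨s.trans' h g₁, g₂⟩)
        · exact Or.inr (Or.inr ⟨s.trans' h g₁, g₂⟩)
        · exact Or.inr (Or.inl ⟨h₁, s.trans' h₂ g⟩)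
        · exact Or.inl (s.trans' h₁ (s.trans' (s.symm' (s.trans' h₂ g₁)) g₂))
        · exact Or.inl (s.trans' h₁ g₂)
        · exact Or.inr (Or.inr ⟨h₁, s.trans' h₂ g⟩)
        · exact Or.inl (s.trans' h₁ g₂)
        · exact Or.inl (s.trans' h₁ (s.trans' (s.symm' (s.trans' h₂ g₁)) g₂)) }

variable {s : Setoid α} {a b x y : α}

lemma mergeAt_apply : s.mergeAt a b x y ↔ s x y ∨ (s x a ∧ s b y) ∨ (s x b ∧ s a y) := Iff.rfl

lemma mergeAt_comm (s : Setoid α) (a b : α) : s.mergeAt a b = s.mergeAt b a :=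
  Setoid.ext fun _ _ => by simp only [mergeAt_apply]; tauto

variable [LinearOrder α]

noncomputable def blockCount (s : Setoid α) : ℕ := {x | ∀ y, s x y → x ≤ y}.ncard

def splitAt (s : Setoid α) (a b : α) : Setoid α where
  r x y := s x y ∧ (s x a → (x ∈ Set.Ioc a b ↔ y ∈ Set.Ioc a b))
  iseqv :=
    { refl := fun x => ⟨s.refl' x, fun _ => Iff.rfl⟩
      symm := fun ⟨hxy, h⟩ => ⟨s.symm' hxy, fun hya => (h (s.trans' hxy hya)).symm⟩
      trans := fun ⟨hxy, h⟩ ⟨hyz, h'⟩ =>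
        ⟨s.trans' hxy hyz, fun hxa => (h hxa).trans (h' (s.trans' (s.symm' hxy) hxa))⟩ }

lemma le_mergeAt_splitAt (hab : s a b) (hlt : a < b) : s ≤ (s.splitAt a b).mergeAt a b := by
  intro x y hxy
  by_cases hxa : s x a
  · have hya : s y a := s.trans' (s.symm' hxy) hxa
    have hb : b ∈ Set.Ioc a b := ⟨hlt, le_rfl⟩
    have ha : a ∉ Set.Ioc a b := fun ha => lt_irrefl a ha.1
    by_cases hx : x ∈ Set.Ioc a b <;> by_cases hy : y ∈ Set.Ioc a b
    · exact Or.inl ⟨hxy, fun _ => iff_of_true hx hy⟩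
    · exact Or.inr (Or.inr ⟨⟨s.trans' hxa hab, fun _ => iff_of_true hx hb⟩,
        ⟨s.symm' hya, fun _ => iff_of_false ha hy⟩⟩)
    · exact Or.inr (Or.inl ⟨⟨hxa, fun _ => iff_of_false hx ha⟩,
        ⟨s.trans' (s.symm' hab) (s.symm' hya), fun _ => iff_of_true hb hy⟩⟩)
    · exact Or.inl ⟨hxy, fun _ => iff_of_false hx hy⟩
  · exact Or.inl ⟨hxy, fun h => absurd h hxa⟩

variable [Finite α]

-- Merging deletes `mB`, the larger of the two least elements, from the least elements of classes.
private lemma blockCount_mergeAt_of_le {mA mB : α} (hmA : s mA a) (hmB : s mB b)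
    (hminA : ∀ y, s y a → mA ≤ y) (hminB : ∀ y, s y b → mB ≤ y) (hab : ¬ s a b)
    (hle : mA ≤ mB) : (s.mergeAt a b).blockCount + 1 = s.blockCount := by
  have hmB_least : mB ∈ {x | ∀ y, s x y → x ≤ y} := fun y hy => hminB y (s.trans' (s.symm' hy) hmB)
  suffices {x | ∀ y, s.mergeAt a b x y → x ≤ y} = {x | ∀ y, s x y → x ≤ y} \ {mB} by
    rw [blockCount, blockCount, this, Set.ncard_sdiff_singleton_add_one hmB_least]
  ext x
  simp only [Set.mem_sdiff, Set.mem_ofPred_eq, Set.mem_singleton_iff]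
  constructor
  · intro hx
    refine ⟨fun y hy => hx y (Or.inl hy), fun hxB => ?_⟩
    subst hxB
    have hmA_eq : mA = x := le_antisymm hle (hx mA (Or.inr (Or.inr ⟨hmB, s.symm' hmA⟩)))
    subst hmA_eq
    exact hab (s.trans' (s.symm' hmA) hmB)
  · rintro ⟨hx, hxB⟩ y (hy | ⟨h₁, h₂⟩ | ⟨h₁, h₂⟩)
    · exact hx y hy
    · have hxA : x = mA := le_antisymm (hx mA (s.trans' h₁ (s.symm' hmA))) (hminA x h₁)
      exact hxA.le.trans (hle.trans (hminB y (s.symm' h₂)))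
    · exact absurd (le_antisymm (hx mB (s.trans' h₁ (s.symm' hmB))) (hminB x h₁)) hxB

lemma blockCount_mergeAt (hab : ¬ s a b) : (s.mergeAt a b).blockCount + 1 = s.blockCount := by
  obtain ⟨mA, hmA, hminA⟩ :=
    Set.exists_min_image {y | s y a} id (Set.toFinite _) ⟨a, s.refl' a⟩
  obtain ⟨mB, hmB, hminB⟩ :=
    Set.exists_min_image {y | s y b} id (Set.toFinite _) ⟨b, s.refl' b⟩
  rcases le_total mA mB with hle | hle
  · exact blockCount_mergeAt_of_le hmA hmB hminA hminB hab hle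
  · rw [mergeAt_comm]
    exact blockCount_mergeAt_of_le hmB hmA hminB hminA (fun h => hab (s.symm' h)) hle

end Setoid

namespace Equiv.Perm

variable {α : Type*}

lemma SameCycle.rel_of_forall_rel_apply [Finite α] {f : Perm α} {r : α → α → Prop}
    (hr : Equivalence r) (h : ∀ z, r z (f z)) {x y : α} (hxy : f.SameCycle x y) : r x y := by
  suffices ∀ (i : ℕ) z, r z ((f ^ i) z) by
    obtain ⟨i, -, rfl⟩ := hxy.exists_pow_eq'
    exact this i x
  intro i
  induction i with
  | zero => exact hr.refl
  | succ i ih =>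
    intro z
    rw [pow_succ, mul_apply]
    exact hr.trans (h z) (ih (f z))

lemma IsSwap.mul_self [DecidableEq α] {t : Perm α} (ht : t.IsSwap) : t * t = 1 := by
  obtain ⟨a, b, -, rfl⟩ := ht
  exact swap_mul_self a b

lemma IsSwap.conj [DecidableEq α] {t : Perm α} (ht : t.IsSwap) (g : Perm α) :
    (g⁻¹ * t * g).IsSwap := by
  obtain ⟨a, b, hab, rfl⟩ := ht
  refine ⟨g⁻¹ a, g⁻¹ b, g⁻¹.injective.ne hab, ?_⟩
  rw [swap_apply_apply, inv_inv]

section Swap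

variable [DecidableEq α] [Finite α] {u : Perm α} {a b : α}

lemma sameCycle_mul_swap_of_not_sameCycle (hab : ¬ u.SameCycle a b) :
    (u * swap a b).SameCycle a b := by
  have key : ∀ j, 1 ≤ j → (u * swap a b).SameCycle a ((u ^ j) b) := by
    refine Nat.le_induction ?_ fun j _ ih => ?_
    · rw [pow_one, show u b = (u * swap a b) a by simp]
      exact (SameCycle.refl _ a).apply_right
    · have hza : (u ^ j) b ≠ a := fun h => hab (SameCycle.symm ⟨j, by rw [zpow_natCast, h]⟩)
      rw [pow_succ', mul_apply]
      by_cases hzb : (u ^ j) b = b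
      · rw [hzb, show u b = (u * swap a b) a by simp]
        exact (SameCycle.refl _ a).apply_right
      · rw [show u ((u ^ j) b) = (u * swap a b) ((u ^ j) b) by
          simp [swap_apply_of_ne_of_ne hza hzb]]
        exact ih.apply_right
  simpa [pow_orderOf_eq_one] using key (orderOf u) (orderOf_pos u)

lemma sameCycle_setoid_mul_swap (hab : ¬ u.SameCycle a b) :
    SameCycle.setoid (u * swap a b) = (SameCycle.setoid u).mergeAt a b := by
  set v := u * swap a b
  have hvab : v.SameCycle a b := sameCycle_mul_swap_of_not_sameCycle hab
  have hva : v a = u b := by simp [v]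
  have hvb : v b = u a := by simp [v]
  have hv : ∀ z, z ≠ a → z ≠ b → v z = u z := fun z h₁ h₂ => by
    simp [v, swap_apply_of_ne_of_ne h₁ h₂]
  have hu : ∀ x y, u.SameCycle x y → v.SameCycle x y := by
    refine fun x y => SameCycle.rel_of_forall_rel_apply (SameCycle.equivalence v) fun z => ?_
    by_cases hza : z = a
    · subst hza
      rw [← hvb]
      exact hvab.trans (SameCycle.refl v b).apply_right
    by_cases hzb : z = b
    · subst hzb
      rw [← hva]
      exact hvab.symm.trans (SameCycle.refl v a).apply_right
    rw [← hv z hza hzb]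
    exact (SameCycle.refl v z).apply_right
  refine Setoid.ext fun x y => ⟨fun h => ?_, fun h => ?_⟩
  · refine SameCycle.rel_of_forall_rel_apply ((SameCycle.setoid u).mergeAt a b).iseqv
      (fun z => ?_) h
    by_cases hza : z = a
    · subst hza
      rw [hva]
      exact Or.inr (Or.inl ⟨SameCycle.refl u z, (SameCycle.refl u b).apply_right⟩)
    by_cases hzb : z = b
    · subst hzb
      rw [hvb]
      exact Or.inr (Or.inr ⟨SameCycle.refl u z, (SameCycle.refl u a).apply_right⟩)
    rw [hv z hza hzb]
    exact Or.inl (SameCycle.refl u z).apply_right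
  · rcases h with h | ⟨h₁, h₂⟩ | ⟨h₁, h₂⟩
    · exact hu x y h
    · exact ((hu x a h₁).trans hvab).trans (hu b y h₂)
    · exact ((hu x b h₁).trans hvab.symm).trans (hu a y h₂)

lemma not_sameCycle_mul_swap (hab : u.SameCycle a b) (hne : a ≠ b) :
    ¬ (u * swap a b).SameCycle a b := by
  classical
  have hex : ∃ j, 0 < j ∧ (u ^ j) a = b := by
    obtain ⟨j, -, hj⟩ := hab.exists_pow_eq'
    exact ⟨j, Nat.pos_of_ne_zero (by rintro rfl; exact hne (by simpa using hj)), hj⟩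
  set j := Nat.find hex
  obtain ⟨hj0, hjb⟩ : 0 < j ∧ (u ^ j) a = b := Nat.find_spec hex
  have hmin : ∀ i, 0 < i → i < j → (u ^ i) a ≠ a ∧ (u ^ i) a ≠ b := by
    refine fun i hi hij => ⟨fun h => Nat.find_min hex (show j - i < j by omega) ⟨by omega, ?_⟩,
      fun h => Nat.find_min hex hij ⟨hi, h⟩⟩
    calc (u ^ (j - i)) a = (u ^ (j - i)) ((u ^ i) a) := by rw [h]
      _ = b := by rw [← mul_apply, ← pow_add, Nat.sub_add_cancel hij.le, hjb]
  -- the arc `u a, u² a, …, b` of the cycle of `u` becomes a cycle of `u * swap a b`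
  set O := {z | ∃ i, 0 < i ∧ i ≤ j ∧ (u ^ i) a = z}
  have hclosed : ∀ z ∈ O, (u * swap a b) z ∈ O := by
    rintro z ⟨i, hi, hij, rfl⟩
    rcases hij.lt_or_eq with hij | rfl
    · have hi' := hmin i hi hij
      rw [mul_apply, swap_apply_of_ne_of_ne hi'.1 hi'.2]
      exact ⟨i + 1, by omega, hij, by rw [pow_succ', mul_apply]⟩
    · rw [hjb, mul_apply, swap_apply_right]
      exact ⟨1, one_pos, hj0, pow_one u ▸ rfl⟩
  have hpow : ∀ m : ℕ, ((u * swap a b) ^ m) b ∈ O := by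
    intro m
    induction m with
    | zero => exact ⟨j, hj0, le_rfl, hjb⟩
    | succ m ih => rw [pow_succ', mul_apply]; exact hclosed _ ih
  rintro hv
  obtain ⟨m, -, hm⟩ := hv.symm.exists_pow_eq'
  obtain ⟨i, hi, hij, hia⟩ := hm ▸ hpow m
  rcases hij.lt_or_eq with hij | rfl
  · exact (hmin i hi hij).1 hia
  · exact hne (hjb ▸ hia).symm

end Swap

section CycleCount

variable [LinearOrder α] [Finite α] {u t : Perm α} {a b : α}

noncomputable def cycleCount (u : Perm α) : ℕ := (SameCycle.setoid u).blockCount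

lemma cycleCount_mul_swap_of_not_sameCycle (hab : ¬ u.SameCycle a b) :
    cycleCount (u * swap a b) + 1 = cycleCount u := by
  rw [cycleCount, sameCycle_setoid_mul_swap hab]
  exact Setoid.blockCount_mergeAt hab

lemma cycleCount_mul_swap_of_sameCycle (hab : u.SameCycle a b) (hne : a ≠ b) :
    cycleCount (u * swap a b) = cycleCount u + 1 := by
  have := cycleCount_mul_swap_of_not_sameCycle (not_sameCycle_mul_swap hab hne)
  rw [mul_swap_mul_self] at this
  omega

lemma IsSwap.cycleCount_mul_le (ht : t.IsSwap) (u : Perm α) :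
    cycleCount (u * t) ≤ cycleCount u + 1 := by
  obtain ⟨a, b, hne, rfl⟩ := ht
  by_cases hab : u.SameCycle a b
  · exact (cycleCount_mul_swap_of_sameCycle hab hne).le
  · have := cycleCount_mul_swap_of_not_sameCycle hab
    omega

lemma IsSwap.cycleCount_le_mul (ht : t.IsSwap) (u : Perm α) :
    cycleCount u ≤ cycleCount (u * t) + 1 := by
  simpa [mul_assoc, ht.mul_self] using ht.cycleCount_mul_le (u * t)

lemma cycleCount_le_of_forall_isSwap {w : ℕ → Perm α} {m : ℕ}
    (hw : ∀ i < m, ((w i)⁻¹ * w (i + 1)).IsSwap) : cycleCount (w 0) ≤ cycleCount (w m) + m :=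
  Nat.le_add_of_forall_le_add_one fun i hi => by
    simpa using (hw i hi).cycleCount_le_mul (w i)

end CycleCount

end Equiv.Perm

section BlockSucc

variable {α : Type*} [LinearOrder α]

/-- `y` follows `x` in the increasing cyclic order of the block of `x`; `IsPiPerm s p` says
exactly that `p x` follows `x` for every `x`. -/
def IsBlockSucc (s : Setoid α) (x y : α) : Prop :=
  s x y ∧ ((∃ z, s x z ∧ x < z) → (x < y ∧ ∀ z, s x z → x < z → y ≤ z)) ∧
    ((∀ z, s x z → z ≤ x) → ∀ z, s x z → y ≤ z)

lemma IsBlockSucc.mono {s s' : Setoid α} {x y : α} (h : IsBlockSucc s x y)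
    (hle : ∀ z, s' x z → s x z) (hy : s' x y)
    (hmax : (∀ z, s' x z → z ≤ x) → ∀ z, s x z → z ≤ x) : IsBlockSucc s' x y :=
  ⟨hy, fun ⟨z, hz, hxz⟩ => (h.2.1 ⟨z, hle z hz, hxz⟩).imp_right fun H z hz => H z (hle z hz),
    fun hm z hz => h.2.2 (hmax hm) z (hle z hz)⟩

end BlockSucc

namespace IsPiPerm

variable {n : ℕ} {s : Setoid (Fin n)} {p q u : Perm (Fin n)} {a b x y : Fin n}

lemma isBlockSucc (h : IsPiPerm s p) (x : Fin n) : IsBlockSucc s x (p x) := h x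

lemma unique (hp : IsPiPerm s p) (hq : IsPiPerm s q) : p = q := by
  ext x
  obtain ⟨hp₁, hp₂, hp₃⟩ := hp x
  obtain ⟨hq₁, hq₂, hq₃⟩ := hq x
  by_cases hx : ∃ y, s x y ∧ x < y
  · exact congrArg Fin.val <|
      le_antisymm ((hp₂ hx).2 _ hq₁ (hq₂ hx).1) ((hq₂ hx).2 _ hp₁ (hp₂ hx).1)
  · push Not at hx
    exact congrArg Fin.val <| le_antisymm (hp₃ hx _ hq₁) (hq₃ hx _ hp₁)

lemma sameCycle_of_rel (h : IsPiPerm s p) (hxy : s x y) (hlt : x < y) : p.SameCycle x y := by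
  induction hk : y.val - x.val using Nat.strong_induction_on generalizing x with
  | _ k ih =>
    obtain ⟨hxpx, hmin⟩ := (h x).2.1 ⟨y, hxy, hlt⟩
    rcases (hmin y hxy hlt).lt_or_eq with hpy | hpy
    · refine (SameCycle.refl p x).apply_right.trans (ih (y.val - (p x).val) ?_
        (s.trans' (s.symm' (h x).1) hxy) hpy rfl)
      rw [Fin.lt_def] at hxpx hlt
      omega
    · rw [← hpy]
      exact (SameCycle.refl p x).apply_right

lemma sameCycle_iff (h : IsPiPerm s p) : p.SameCycle x y ↔ s x y := by
  refine ⟨SameCycle.rel_of_forall_rel_apply s.iseqv fun z => (h z).1, fun hxy => ?_⟩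
  rcases lt_trichotomy x y with hlt | rfl | hlt
  · exact h.sameCycle_of_rel hxy hlt
  · exact SameCycle.refl p x
  · exact (h.sameCycle_of_rel (s.symm' hxy) hlt).symm

lemma sameCycle_setoid (h : IsPiPerm s p) : SameCycle.setoid p = s :=
  Setoid.ext fun _ _ => h.sameCycle_iff

lemma apply_mem_Ioc_iff (h : IsPiPerm s u) (hab : s a b) (hxa : s x a) (hxa' : x ≠ a)
    (hxb : x ≠ b) : u x ∈ Set.Ioc a b ↔ x ∈ Set.Ioc a b := by
  by_cases hx : x ∈ Set.Ioc a b
  · have hxb' : x < b := lt_of_le_of_ne hx.2 hxb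
    obtain ⟨hxu, hub⟩ := (h x).2.1 ⟨b, s.trans' hxa hab, hxb'⟩
    exact iff_of_true ⟨hx.1.trans hxu, hub b (s.trans' hxa hab) hxb'⟩ hx
  refine iff_of_false (fun hu => ?_) hx
  rcases lt_or_gt_of_ne hxa' with hlt | hgt
  · exact (hu.1.trans_le ((h x).2.1 ⟨a, hxa, hlt⟩ |>.2 a hxa hlt)).false
  have hbx : b < x := lt_of_not_ge fun hle => hx ⟨hgt, hle⟩
  by_cases hmax : ∃ y, s x y ∧ x < y
  · exact (hu.2.trans_lt (hbx.trans ((h x).2.1 hmax).1)).false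
  · push Not at hmax
    exact (hu.1.trans_le ((h x).2.2 hmax a hxa)).false

lemma isBlockSucc_splitAt_of_ne (h : IsPiPerm s u) (hab : s a b) (hxa : x ≠ a) (hxb : x ≠ b) :
    IsBlockSucc (s.splitAt a b) x (u x) := by
  refine (h.isBlockSucc x).mono (fun z hz => hz.1)
    ⟨(h x).1, fun hxa' => (h.apply_mem_Ioc_iff hab hxa' hxa hxb).symm⟩ fun hmax z hz => ?_
  by_cases hxa' : s x a
  · by_cases hx : x ∈ Set.Ioc a b
    · exact absurd (le_antisymm hx.2 (hmax b ⟨s.trans' hxa' hab, fun _ => iff_of_true hx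
        ⟨hx.1.trans_le hx.2, le_rfl⟩⟩)) hxb
    have hax : a < x := lt_of_le_of_ne
      (hmax a ⟨hxa', fun _ => iff_of_false hx fun ha => (lt_irrefl a ha.1)⟩) hxa.symm
    by_cases hz' : z ∈ Set.Ioc a b
    · exact hz'.2.trans (le_of_not_gt fun hxb' => hx ⟨hax, hxb'.le⟩)
    · exact hmax z ⟨hz, fun _ => iff_of_false hx hz'⟩
  · exact hmax z ⟨hz, fun hxa'' => absurd hxa'' hxa'⟩

lemma isBlockSucc_splitAt_right (h : IsPiPerm s u) (hab : s a b) (hlt : a < b) :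
    IsBlockSucc (s.splitAt a b) b (u a) := by
  obtain ⟨hau, hmin⟩ := (h a).2.1 ⟨b, hab, hlt⟩
  have hb : b ∈ Set.Ioc a b := ⟨hlt, le_rfl⟩
  have hua : u a ∈ Set.Ioc a b := ⟨hau, hmin b hab hlt⟩
  have hIoc : ∀ z, s.splitAt a b b z → z ∈ Set.Ioc a b :=
    fun z hz => (hz.2 (s.symm' hab)).mp hb
  refine ⟨⟨s.trans' (s.symm' hab) (h a).1, fun _ => iff_of_true hb hua⟩,
    fun ⟨z, hz, hbz⟩ => absurd (hIoc z hz).2 (not_le.mpr hbz), fun _ z hz => ?_⟩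
  exact hmin z (s.trans' hab hz.1) (hIoc z hz).1

lemma isBlockSucc_splitAt_left (h : IsPiPerm s u) (hab : s a b) (hlt : a < b) :
    IsBlockSucc (s.splitAt a b) a (u b) := by
  have ha : a ∉ Set.Ioc a b := fun ha => lt_irrefl a ha.1
  have hIoc : ∀ z, s.splitAt a b a z → z ∉ Set.Ioc a b :=
    fun z hz hz' => ha ((hz.2 (s.refl' a)).mpr hz')
  have hbz : ∀ z, s.splitAt a b a z → a < z → b < z :=
    fun z hz haz => lt_of_not_ge fun hzb => hIoc z hz ⟨haz, hzb⟩
  by_cases hmax : ∃ z, s b z ∧ b < z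
  · obtain ⟨hbu, hmin⟩ := (h b).2.1 hmax
    refine ⟨⟨s.trans' hab (h b).1, fun _ => iff_of_false ha fun hu => (hu.2.trans_lt hbu).false⟩,
      fun _ => ⟨hlt.trans hbu, fun z hz haz => hmin z (s.trans' (s.symm' hab) hz.1) (hbz z hz haz)⟩,
      fun hamax => absurd (hamax _ ⟨s.trans' hab (h b).1, fun _ => iff_of_false ha
        fun hu => (hu.2.trans_lt hbu).false⟩) (not_le.mpr (hlt.trans hbu))⟩
  · push Not at hmax
    have hua : u b ≤ a := (h b).2.2 hmax a (s.symm' hab)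
    refine ⟨⟨s.trans' hab (h b).1, fun _ => iff_of_false ha fun hu => (hu.1.trans_le hua).false⟩,
      fun ⟨z, hz, haz⟩ => absurd (hmax z (s.trans' (s.symm' hab) hz.1)) (not_le.mpr (hbz z hz haz)),
      fun _ z hz => (h b).2.2 hmax z (s.trans' (s.symm' hab) hz.1)⟩

theorem splitAt (h : IsPiPerm s u) (hab : s a b) (hlt : a < b) :
    IsPiPerm (s.splitAt a b) (u * swap a b) := by
  intro x
  show IsBlockSucc _ x ((u * swap a b) x)
  rcases eq_or_ne x a with rfl | hxa
  · rw [mul_apply, swap_apply_left]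
    exact h.isBlockSucc_splitAt_left hab hlt
  rcases eq_or_ne x b with rfl | hxb
  · rw [mul_apply, swap_apply_right]
    exact h.isBlockSucc_splitAt_right hab hlt
  rw [mul_apply, swap_apply_of_ne_of_ne hxa hxb]
  exact h.isBlockSucc_splitAt_of_ne hab hxa hxb

end IsPiPerm

namespace IsNoncrossing

variable {n : ℕ} {s : Setoid (Fin n)}

lemma splitAt (hnc : IsNoncrossing s) (a b : Fin n) :
    IsNoncrossing (s.splitAt a b) := by
  rintro x y z w hxy hyz hzw ⟨hxz, hxz'⟩ ⟨hyw, hyw'⟩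
  have hxy' : s x y := hnc x y z w hxy hyz hzw hxz hyw
  refine ⟨hxy', fun hxa => ⟨fun hx => ?_, fun hy => ?_⟩⟩
  · exact ⟨hx.1.trans hxy, hyz.le.trans ((hxz' hxa).mp hx).2⟩
  · by_contra hx
    have hz : z ∉ Set.Ioc a b := fun hz => hx ((hxz' hxa).mpr hz)
    exact hz ⟨hy.1.trans hyz, hzw.le.trans ((hyw' (s.trans' (s.symm' hxy') hxa)).mp hy).2⟩

lemma mem_Ioo_iff (hnc : IsNoncrossing s)
    {l h y z : Fin n} (hlh : s l h) (hyz : s y z) (hyl : ¬ s y l) :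
    y ∈ Set.Ioo l h ↔ z ∈ Set.Ioo l h := by
  suffices key : ∀ y z, s y z → ¬ s y l → y ∈ Set.Ioo l h → z ∈ Set.Ioo l h from
    ⟨key y z hyz hyl, key z y (s.symm' hyz) fun hzl => hyl (s.trans' hyz hzl)⟩
  intro y z hyz hyl hy
  by_contra hz
  rcases lt_trichotomy z l with hzl | rfl | hlz
  · exact hyl (s.trans' hyz (hnc z l y h hzl hy.1 hy.2 (s.symm' hyz) hlh))
  · exact hyl hyz
  rcases lt_trichotomy z h with hzh | rfl | hhz
  · exact hz ⟨hlz, hzh⟩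
  · exact hyl (s.trans' hyz (s.symm' hlh))
  · exact hyl (s.symm' (hnc l y h z hy.1 hy.2 hhz hlh hyz))

lemma mem_Icc_iff (hnc : IsNoncrossing s)
    {d lo hi y z : Fin n} (hlo : s d lo) (hhi : s d hi) (hlo_le : ∀ w, s d w → lo ≤ w)
    (hle_hi : ∀ w, s d w → w ≤ hi) (hyz : s y z) : y ∈ Set.Icc lo hi ↔ z ∈ Set.Icc lo hi := by
  by_cases hyd : s d y
  · have hzd : s d z := s.trans' hyd hyz
    exact iff_of_true ⟨hlo_le y hyd, hle_hi y hyd⟩ ⟨hlo_le z hzd, hle_hi z hzd⟩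
  have hIcc : ∀ w, ¬ s d w → (w ∈ Set.Icc lo hi ↔ w ∈ Set.Ioo lo hi) := fun w hw =>
    ⟨fun h => ⟨lt_of_le_of_ne h.1 fun e => hw (e ▸ hlo), lt_of_le_of_ne h.2 fun e => hw (e ▸ hhi)⟩,
      fun h => ⟨h.1.le, h.2.le⟩⟩
  rw [hIcc y hyd, hIcc z fun hzd => hyd (s.trans' hzd (s.symm' hyz)),
    hnc.mem_Ioo_iff (s.trans' (s.symm' hlo) hhi) hyz fun hyl => hyd (s.trans' hlo (s.symm' hyl))]

end IsNoncrossing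

namespace NC

variable {n : ℕ}

def splitAt (y : NC n) (a b : Fin n) : NC n := ⟨y.val.splitAt a b, y.2.splitAt a b⟩

lemma splitAt_covBy {y : NC n} {a b : Fin n} (hab : y.val a b) (hlt : a < b) :
    y.splitAt a b ⋖ y := by
  have hsplit : ¬ (y.splitAt a b).val a b := fun h =>
    lt_irrefl a ((h.2 (y.val.refl' a)).mpr ⟨hlt, le_rfl⟩).1
  have hmerge := Setoid.le_mergeAt_splitAt hab hlt
  refine ⟨lt_of_le_of_ne (fun _ _ h => h.1) fun h => hsplit (by rw [h]; exact hab),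
    fun z hxz hzy => ?_⟩
  have hxz' : ∀ {p q}, (y.splitAt a b).val p q → z.val p q := fun h => hxz.le h
  by_cases hz : z.val a b
  · refine hzy.not_ge fun p q hpq => ?_
    rcases hmerge hpq with h | ⟨h₁, h₂⟩ | ⟨h₁, h₂⟩
    · exact hxz' h
    · exact z.val.trans' (hxz' h₁) (z.val.trans' hz (hxz' h₂))
    · exact z.val.trans' (hxz' h₁) (z.val.trans' (z.val.symm' hz) (hxz' h₂))
  · refine hxz.not_ge fun p q hpq => ?_
    rcases hmerge (hzy.le hpq) with h | ⟨h₁, h₂⟩ | ⟨h₁, h₂⟩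
    · exact h
    · exact absurd (z.val.trans' (z.val.symm' (hxz' h₁))
        (z.val.trans' hpq (z.val.symm' (hxz' h₂)))) hz
    · exact absurd (z.val.trans' (hxz' h₂)
        (z.val.trans' (z.val.symm' hpq) (hxz' h₁))) hz

/-- From a block `T` of `y`, split off a block `D` of `x` with `min T ∉ D`, together with everything
of `T` lying between `min D` and `max D`. -/
theorem exists_le_splitAt {x y : NC n} (hxy : x < y) :
    ∃ a b, a < b ∧ y.val a b ∧ x ≤ y.splitAt a b := by
  obtain ⟨p, q, hpq, hpq'⟩ : ∃ p q, y.val p q ∧ ¬ x.val p q := by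
    by_contra! h
    exact hxy.not_ge fun p q hpq => h p q hpq
  obtain ⟨m, hm, hm_min⟩ :=
    Set.exists_min_image {z | y.val p z} id (Set.toFinite _) ⟨p, y.val.refl' p⟩
  obtain ⟨d, hdm, hdm'⟩ : ∃ d, y.val d m ∧ ¬ x.val d m := by
    by_cases hpm : x.val p m
    · exact ⟨q, y.val.trans' (y.val.symm' hpq) hm,
        fun hqm => hpq' (x.val.trans' hpm (x.val.symm' hqm))⟩
    · exact ⟨p, hm, hpm⟩
  obtain ⟨lo, hlo, hlo_le⟩ :=
    Set.exists_min_image {z | x.val d z} id (Set.toFinite _) ⟨d, x.val.refl' d⟩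
  obtain ⟨hi, hhi, hle_hi⟩ :=
    Set.exists_max_image {z | x.val d z} id (Set.toFinite _) ⟨d, x.val.refl' d⟩
  have hyd : ∀ {z}, x.val d z → y.val z d := fun h => y.val.symm' (hxy.le h)
  have hm_lo : m < lo := lt_of_le_of_ne
    (hm_min lo (y.val.trans' hm (y.val.trans' (y.val.symm' hdm) (hxy.le hlo))))
    fun e => hdm' (e ▸ hlo)
  obtain ⟨a, ⟨had, halo⟩, ha_max⟩ := Set.exists_max_image {z | y.val z d ∧ z < lo} id
    (Set.toFinite _) ⟨m, y.val.symm' hdm, hm_lo⟩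
  have hIoc : ∀ z, y.val z d → (z ∈ Set.Ioc a hi ↔ z ∈ Set.Icc lo hi) := fun z hz =>
    ⟨fun h => ⟨le_of_not_gt fun hzlo => (h.1.trans_le (ha_max z ⟨hz, hzlo⟩)).false, h.2⟩,
      fun h => ⟨halo.trans_le h.1, h.2⟩⟩
  refine ⟨a, hi, halo.trans_le (hlo_le hi hhi), y.val.trans' had (y.val.symm' (hyd hhi)),
    fun z w hzw => ⟨hxy.le hzw, fun hza => ?_⟩⟩
  have hzd : y.val z d := y.val.trans' hza had
  rw [hIoc z hzd, hIoc w (y.val.trans' (y.val.symm' (hxy.le hzw)) hzd)]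
  exact x.2.mem_Icc_iff hlo hhi hlo_le hle_hi hzw

theorem eq_splitAt_of_covBy {x y : NC n} (h : x ⋖ y) :
    ∃ a b, a < b ∧ y.val a b ∧ x = y.splitAt a b := by
  obtain ⟨a, b, hlt, hab, hle⟩ := exists_le_splitAt h.lt
  refine ⟨a, b, hlt, hab, hle.eq_of_not_lt fun hlt' => h.2 hlt' (splitAt_covBy hab hlt).lt⟩

variable {π : NC n → Perm (Fin n)}

lemma pi_injective (hπ : ∀ σ : NC n, IsPiPerm σ.val (π σ)) : Function.Injective π :=
  fun x y h => Subtype.ext <| by rw [← (hπ x).sameCycle_setoid, ← (hπ y).sameCycle_setoid, h]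

lemma eq_iff_of_labels_eq (hπ : ∀ σ : NC n, IsPiPerm σ.val (π σ)) {d d' : ℕ → NC n} {k : ℕ}
    (h : ∀ i < k, (π (d i))⁻¹ * π (d (i + 1)) = (π (d' i))⁻¹ * π (d' (i + 1))) :
    d 0 = d' 0 ↔ d k = d' k := by
  rw [← (pi_injective hπ).eq_iff, ← (pi_injective hπ).eq_iff, ← mul_inv_eq_one,
    ← mul_inv_eq_one (a := π (d k)), mul_inv_eq_of_forall_inv_mul_eq h]

lemma pi_splitAt (hπ : ∀ σ : NC n, IsPiPerm σ.val (π σ)) {y : NC n} {a b : Fin n}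
    (hab : y.val a b) (hlt : a < b) : π (y.splitAt a b) = π y * swap a b :=
  (hπ _).unique ((hπ y).splitAt hab hlt)

theorem isSwap_and_cycleCount_of_covBy (hπ : ∀ σ : NC n, IsPiPerm σ.val (π σ)) {x y : NC n}
    (h : x ⋖ y) : ((π x)⁻¹ * π y).IsSwap ∧ cycleCount (π x) = cycleCount (π y) + 1 := by
  obtain ⟨a, b, hlt, hab, rfl⟩ := eq_splitAt_of_covBy h
  rw [pi_splitAt hπ hab hlt, mul_inv_rev, swap_inv, inv_mul_cancel_right]
  exact ⟨⟨a, b, hlt.ne, rfl⟩,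
    cycleCount_mul_swap_of_sameCycle ((hπ y).sameCycle_iff.mpr hab) hlt.ne⟩

lemma isSwap_mul_right_of_covBy (hπ : ∀ σ : NC n, IsPiPerm σ.val (π σ)) {x y : NC n}
    (h : x ⋖ y) (g : Perm (Fin n)) : ((π x * g)⁻¹ * (π y * g)).IsSwap := by
  simpa [mul_assoc] using (isSwap_and_cycleCount_of_covBy hπ h).1.conj g

lemma cycleCount_pi_of_chain (hπ : ∀ σ : NC n, IsPiPerm σ.val (π σ)) {c : ℕ → NC n} {k : ℕ}
    (hc : ∀ i < k, c i ⋖ c (i + 1)) : cycleCount (π (c 0)) = cycleCount (π (c k)) + k :=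
  Nat.eq_add_of_forall_eq_add_one fun i hi => (isSwap_and_cycleCount_of_covBy hπ (hc i hi)).2

theorem exists_covBy_of_isSwap (hπ : ∀ σ : NC n, IsPiPerm σ.val (π σ)) {w : Perm (Fin n)}
    {y : NC n} (ht : (w⁻¹ * π y).IsSwap) (hc : cycleCount w = cycleCount (π y) + 1) :
    ∃ x, x ⋖ y ∧ π x = w := by
  obtain ⟨a, b, hne, ht⟩ := ht
  have hw : w = π y * swap a b := by
    rw [show π y = w * swap a b by rw [← ht, mul_inv_cancel_left], mul_swap_mul_self]
  have hab : y.val a b := by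
    refine (hπ y).sameCycle_iff.mp (by_contra fun hs => ?_)
    have := cycleCount_mul_swap_of_not_sameCycle hs
    rw [← hw] at this
    omega
  rcases hne.lt_or_gt with hlt | hlt
  · exact ⟨y.splitAt a b, splitAt_covBy hab hlt, by rw [pi_splitAt hπ hab hlt, hw]⟩
  · exact ⟨y.splitAt b a, splitAt_covBy (y.val.symm' hab) hlt,
      by rw [pi_splitAt hπ (y.val.symm' hab) hlt, hw, swap_comm]⟩

/-- Read downwards, each step raises the cycle count, hence splits a cycle of a noncrossing
permutation. -/
theorem exists_chain_of_isSwap (hπ : ∀ σ : NC n, IsPiPerm σ.val (π σ)) {v : ℕ → Perm (Fin n)}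
    {k : ℕ} {y : NC n} (hy : π y = v k) (hv : ∀ i < k, ((v i)⁻¹ * v (i + 1)).IsSwap)
    (hcount : cycleCount (v k) + k ≤ cycleCount (v 0)) :
    ∃ d : ℕ → NC n, (∀ i ≤ k, π (d i) = v i) ∧ ∀ i < k, d i ⋖ d (i + 1) := by
  have hstep : ∀ i < k, cycleCount (v i) = cycleCount (v (i + 1)) + 1 :=
    Nat.forall_eq_add_one_of_le_add_one
      (fun i hi => by simpa using (hv i hi).cycleCount_le_mul (v i)) hcount
  have hex : ∀ i ≤ k, ∃ x, π x = v i := fun i hi => by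
    induction hi using Nat.decreasingInduction with
    | self => exact ⟨y, hy⟩
    | of_succ i hi ih =>
      obtain ⟨x, hx⟩ := ih
      obtain ⟨x', -, hx'⟩ := exists_covBy_of_isSwap hπ (hx ▸ hv i hi) (hx ▸ hstep i hi)
      exact ⟨x', hx'⟩
  have : Nonempty (NC n) := ⟨y⟩
  choose! d hd using hex
  refine ⟨d, hd, fun i hi => ?_⟩
  obtain ⟨x, hx, hxv⟩ := exists_covBy_of_isSwap hπ (w := v i) (y := d (i + 1))
    (by rw [hd _ hi]; exact hv i hi) (by rw [hd _ hi]; exact hstep i hi)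
  rwa [pi_injective hπ (hxv.trans (hd i hi.le).symm)] at hx

theorem exists_chain_mul_left (hπ : ∀ σ : NC n, IsPiPerm σ.val (π σ)) {c : ℕ → NC n} {k : ℕ}
    (hc : ∀ i < k, c i ⋖ c (i + 1)) (g : Perm (Fin n)) {y : NC n} (hy : π y = g * π (c k))
    (hcount : cycleCount (g * π (c k)) + k ≤ cycleCount (g * π (c 0))) :
    ∃ d : ℕ → NC n, (∀ i ≤ k, π (d i) = g * π (c i)) ∧ (∀ i < k, d i ⋖ d (i + 1)) ∧
      ∀ i < k, (π (d i))⁻¹ * π (d (i + 1)) = (π (c i))⁻¹ * π (c (i + 1)) := by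
  obtain ⟨d, hd, hdc⟩ := exists_chain_of_isSwap hπ (v := fun i => g * π (c i)) hy
    (fun i hi => by simpa [mul_assoc] using (isSwap_and_cycleCount_of_covBy hπ (hc i hi)).1)
    hcount
  exact ⟨d, hd, hdc, fun i hi => by rw [hd i hi.le, hd (i + 1) hi]; group⟩

theorem existsUnique_chain_to_of_labels (hπ : ∀ σ : NC n, IsPiPerm σ.val (π σ)) {σ τ : NC n}
    (hστ : σ ≤ τ) {k : ℕ} {c : ℕ → NC n} (hck : c k = σ) (hc : ∀ i < k, c i ⋖ c (i + 1)) :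
    ∃! σ' : NC n, ∃ d : ℕ → NC n, d 0 = σ' ∧ d k = τ ∧ (∀ i < k, d i ⋖ d (i + 1)) ∧
      ∀ i < k, (π (d i))⁻¹ * π (d (i + 1)) = (π (c i))⁻¹ * π (c (i + 1)) := by
  obtain ⟨e, he0, m, hem, he⟩ := exists_covBy_seq_of_wellFoundedLT_wellFoundedGT_of_le hστ
  have hc_cyc := cycleCount_pi_of_chain hπ hc
  have he_cyc := cycleCount_pi_of_chain hπ he
  rw [hck] at hc_cyc
  rw [he0, hem] at he_cyc
  have hbound : cycleCount (π (c 0)) ≤ cycleCount (π τ * (π σ)⁻¹ * π (c 0)) + m := by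
    simpa [he0, hem, mul_assoc] using cycleCount_le_of_forall_isSwap (m := m)
      fun i hi => isSwap_mul_right_of_covBy hπ (he i hi) ((π σ)⁻¹ * π (c 0))
  obtain ⟨d, hd, hdc, hlabels⟩ := exists_chain_mul_left hπ hc (π τ * (π σ)⁻¹) (y := τ)
    (by simp [hck]) (by rw [hck, inv_mul_cancel_right]; omega)
  have hdk : d k = τ := pi_injective hπ (by simp [hd k le_rfl, hck])
  refine ⟨d 0, ⟨d, rfl, hdk, hdc, hlabels⟩, ?_⟩
  rintro _ ⟨d', rfl, hd'k, -, hd'⟩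
  exact (eq_iff_of_labels_eq hπ fun i hi => (hd' i hi).trans (hlabels i hi).symm).mpr
    (hd'k.trans hdk.symm)

theorem existsUnique_chain_from_of_labels (hπ : ∀ σ : NC n, IsPiPerm σ.val (π σ)) {ρ σ : NC n}
    (hρσ : ρ ≤ σ) {k : ℕ} {c : ℕ → NC n} (hc0 : c 0 = σ) (hc : ∀ i < k, c i ⋖ c (i + 1)) :
    ∃! σ'' : NC n, ∃ d : ℕ → NC n, d 0 = ρ ∧ d k = σ'' ∧ (∀ i < k, d i ⋖ d (i + 1)) ∧
      ∀ i < k, (π (d i))⁻¹ * π (d (i + 1)) = (π (c i))⁻¹ * π (c (i + 1)) := by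
  obtain ⟨e, he0, m, hem, he⟩ := exists_covBy_seq_of_wellFoundedLT_wellFoundedGT_of_le hρσ
  have hc_cyc := cycleCount_pi_of_chain hπ hc
  have he_cyc := cycleCount_pi_of_chain hπ he
  rw [hc0] at hc_cyc
  rw [he0, hem] at he_cyc
  have hbound : cycleCount (π ρ) ≤ cycleCount (π ρ * ((π σ)⁻¹ * π (c k))) + k := by
    simpa [hc0, mul_assoc] using cycleCount_le_of_forall_isSwap (m := k)
      (w := fun i => π ρ * (π σ)⁻¹ * π (c i))
      fun i hi => by simpa [mul_assoc] using (isSwap_and_cycleCount_of_covBy hπ (hc i hi)).1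
  -- the far end is reached from `π (c k)` by translating the chain `e` on the right
  obtain ⟨f, hf, hfc⟩ := exists_chain_of_isSwap hπ (y := c k)
    (v := fun i => π (e i) * ((π σ)⁻¹ * π (c k))) (by simp [hem])
    (fun i hi => isSwap_mul_right_of_covBy hπ (he i hi) _)
    (by simp only [he0, hem, mul_inv_cancel_left]; omega)
  have hf0 := cycleCount_pi_of_chain hπ hfc
  rw [hf 0 (Nat.zero_le _), hf m le_rfl, he0, hem, mul_inv_cancel_left] at hf0
  obtain ⟨d, hd, hdc, hlabels⟩ := exists_chain_mul_left hπ hc (π ρ * (π σ)⁻¹) (y := f 0)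
    (by rw [hf 0 (Nat.zero_le _), he0, mul_assoc])
    (by rw [hc0, inv_mul_cancel_right, mul_assoc]; omega)
  have hd0 : d 0 = ρ := pi_injective hπ (by rw [hd 0 (Nat.zero_le _), hc0, inv_mul_cancel_right])
  refine ⟨d k, ⟨d, hd0, rfl, hdc, hlabels⟩, ?_⟩
  rintro _ ⟨d', hd'0, rfl, -, hd'⟩
  exact (eq_iff_of_labels_eq hπ fun i hi => (hd' i hi).trans (hlabels i hi).symm).mp
    (hd'0.trans hd0.symm)

end NC

/-- Let `ρ < σ < τ` in `NC_n`.
(a) For any saturated chain from `ρ` to `σ` with label sequence `(α_1, …, α_k)`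
(where `α_i = π(σ_{i-1})⁻¹ π(σ_i)`), there is a unique `σ'` in `NC_n` admitting a
saturated chain from `σ'` to `τ` with the exact same sequence of labels.
(b) Dually, for any saturated chain from `σ` to `τ` with label sequence
`(β_1, …, β_k)`, there is a unique `σ''` in `NC_n` admitting a saturated chain from
`ρ` to `σ''` with the same sequence of labels. -/
theorem NC_chain_label_transport (n : ℕ)
    (π : NC n → Equiv.Perm (Fin n)) (hπ : ∀ σ : NC n, IsPiPerm σ.val (π σ))
    (ρ σ τ : NC n) (hρσ : ρ < σ) (hστ : σ < τ) :
    (∀ (k : ℕ) (c : ℕ → NC n), c 0 = ρ → c k = σ → (∀ i < k, c i ⋖ c (i + 1)) →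
      ∃! σ' : NC n, ∃ d : ℕ → NC n, d 0 = σ' ∧ d k = τ ∧ (∀ i < k, d i ⋖ d (i + 1)) ∧
        ∀ i < k, (π (d i))⁻¹ * π (d (i + 1)) = (π (c i))⁻¹ * π (c (i + 1))) ∧
    (∀ (k : ℕ) (c : ℕ → NC n), c 0 = σ → c k = τ → (∀ i < k, c i ⋖ c (i + 1)) →
      ∃! σ'' : NC n, ∃ d : ℕ → NC n, d 0 = ρ ∧ d k = σ'' ∧ (∀ i < k, d i ⋖ d (i + 1)) ∧
        ∀ i < k, (π (d i))⁻¹ * π (d (i + 1)) = (π (c i))⁻¹ * π (c (i + 1))) :=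
  ⟨fun _ _ _ hck hc => NC.existsUnique_chain_to_of_labels hπ hστ.le hck hc,
    fun _ _ hc0 _ hc => NC.existsUnique_chain_from_of_labels hπ hρσ.le hc0 hc⟩
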